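/- Let p be a prime and P, Q nonzero integers with p | gcd(P,Q) and 2·v_p(P) > v_p(Q). Then for every odd n ≥ 1, v_p(U_n(P,Q)) = v_p(Q)·(n−1)/2. -/
import Mathlib


def lucasU (P Q : ℤ) : ℕ → ℤ
  | 0 => 0
  | 1 => 1
  | (n + 2) => P * lucasU P Q (n + 1) - Q * lucasU P Q n

lemma padicValInt_eq_of_dvd_of_not_dvd {p : ℕ} [Fact p.Prime] {x : ℤ} {k : ℕ}
    (hx : x ≠ 0) (h1 : (p : ℤ) ^ k ∣ x) (h2 : ¬ (p : ℤ) ^ (k + 1) ∣ x) :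
    padicValInt p x = k := by
  have hk : k ≤ padicValInt p x := ((padicValInt_dvd_iff k x).mp h1).resolve_left hx
  by_contra h
  exact h2 ((padicValInt_dvd_iff (k + 1) x).mpr (Or.inr (by omega)))

theorem vp_lucasU_odd_of_two_vP_gt_vQ (p : ℕ) (hp : p.Prime) (P Q : ℤ)
    (hP : P ≠ 0) (hQ : Q ≠ 0) (hpPQ : (p : ℤ) ∣ gcd P Q)
    (hv : padicValInt p Q < 2 * padicValInt p P)
    (hnd : ∀ n : ℕ, 1 ≤ n → lucasU P Q n ≠ 0) :
    ∀ n : ℕ, 1 ≤ n → Odd n →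
      padicValInt p (lucasU P Q n) = padicValInt p Q * ((n - 1) / 2) := by
  have : Fact p.Prime := ⟨hp⟩
  set vP := padicValInt p P with hvP
  set vQ := padicValInt p Q with hvQ
  -- joint induction
  have key : ∀ m : ℕ, padicValInt p (lucasU P Q (2 * m + 1)) = m * vQ ∧
      (p : ℤ) ^ (vP + m * vQ) ∣ lucasU P Q (2 * m + 2) := by
    intro m
    induction m with
    | zero =>
      constructor
      · have h1 : lucasU P Q (2 * 0 + 1) = 1 := rfl
        rw [h1, padicValInt.one, Nat.zero_mul]
      · have h2 : lucasU P Q (2 * 0 + 2) = P * 1 - Q * 0 := rfl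
        have h3 : vP + 0 * vQ = vP := by ring
        rw [h2, h3]
        simpa using padicValInt_dvd (p := p) P
    | succ m ih =>
      obtain ⟨ih1, ih2⟩ := ih
      have hU1 : lucasU P Q (2 * m + 1) ≠ 0 := hnd _ (by omega)
      have hU2 : lucasU P Q (2 * m + 2) ≠ 0 := hnd _ (by omega)
      have hU3 : lucasU P Q (2 * m + 3) ≠ 0 := hnd _ (by omega)
      have hrec3 : lucasU P Q (2 * m + 3)
          = P * lucasU P Q (2 * m + 2) - Q * lucasU P Q (2 * m + 1) := rfl
      -- valuation of Q * U(2m+1)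
      have hmulQ : padicValInt p (Q * lucasU P Q (2 * m + 1)) = (m + 1) * vQ := by
        rw [padicValInt.mul hQ hU1, ih1]; ring
      -- p^((m+1)vQ + 1) divides P * U(2m+2)
      have hdvdP : (p : ℤ) ^ ((m + 1) * vQ + 1) ∣ P * lucasU P Q (2 * m + 2) := by
        have h1 : (p : ℤ) ^ vP ∣ P := padicValInt_dvd P
        have h2 := ih2
        have : (p : ℤ) ^ (vP + (vP + m * vQ)) ∣ P * lucasU P Q (2 * m + 2) := by
          rw [pow_add]; exact mul_dvd_mul h1 h2
        have harith : (m + 1) * vQ = m * vQ + vQ := by ring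
        exact dvd_trans (pow_dvd_pow _ (by omega)) this
      have hdvdQ : (p : ℤ) ^ ((m + 1) * vQ) ∣ Q * lucasU P Q (2 * m + 1) := by
        rw [← hmulQ]; exact padicValInt_dvd _
      have hndvdQ : ¬ (p : ℤ) ^ ((m + 1) * vQ + 1) ∣ Q * lucasU P Q (2 * m + 1) := by
        intro h
        have := ((padicValInt_dvd_iff _ _).mp h).resolve_left (mul_ne_zero hQ hU1)
        rw [hmulQ] at this; omega
      have hval3 : padicValInt p (lucasU P Q (2 * m + 3)) = (m + 1) * vQ := by
        apply padicValInt_eq_of_dvd_of_not_dvd hU3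
        · rw [hrec3]
          exact dvd_sub (dvd_trans (pow_dvd_pow _ (Nat.le_succ _)) hdvdP) hdvdQ
        · rw [hrec3]
          intro h
          exact hndvdQ (by simpa using dvd_sub hdvdP h)
      constructor
      · show padicValInt p (lucasU P Q (2 * (m + 1) + 1)) = (m + 1) * vQ
        have : 2 * (m + 1) + 1 = 2 * m + 3 := by ring
        rw [this]; exact hval3
      · show (p : ℤ) ^ (vP + (m + 1) * vQ) ∣ lucasU P Q (2 * (m + 1) + 2)
        have hrec4 : lucasU P Q (2 * (m + 1) + 2)
            = P * lucasU P Q (2 * m + 3) - Q * lucasU P Q (2 * m + 2) := rfl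
        rw [hrec4]
        apply dvd_sub
        · rw [pow_add]
          exact mul_dvd_mul (padicValInt_dvd P) (hval3 ▸ padicValInt_dvd _)
        · have : (p : ℤ) ^ (vQ + (vP + m * vQ)) ∣ Q * lucasU P Q (2 * m + 2) := by
            rw [pow_add]; exact mul_dvd_mul (padicValInt_dvd Q) ih2
          have harith : (m + 1) * vQ = m * vQ + vQ := by ring
          exact dvd_trans (pow_dvd_pow _ (by omega)) this
  intro n hn ⟨m, hm⟩
  subst hm
  have h1 : 2 * m + 1 - 1 = 2 * m := by omega
  rw [h1, Nat.mul_div_cancel_left m (by norm_num), (key m).1, Nat.mul_comm]
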